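/- arXiv:math/0602550 — 5 statements merged into one kernel-verified Lean document; each statement's English description precedes it below -/
import Mathlib

section
/- For every I ∈ 𝓘(R,𝐮), multiplication by u^{p−1} induces a well-defined and injective R-module homomorphism (I + 𝐮R)/𝐮R → (I^{[p]} + 𝐮^p R)/𝐮^p R, sending the class of r modulo 𝐮R to the class of u^{p−1}·r modulo 𝐮^p R. -/
open IsLocalRing

private lemma pow_reg_aux {R : Type*} [CommRing R] {J : Ideal R} {x : R}
    (h : ∀ a, x * a ∈ J → a ∈ J) : ∀ (m : ℕ) (a : R), x ^ m * a ∈ J → a ∈ J := by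
  intro m
  induction m with
  | zero => intro a ha; simpa using ha
  | succ m ih =>
      intro a ha
      apply ih
      apply h
      have hh : x * (x ^ m * a) = x ^ (m + 1) * a := by ring
      rw [hh]
      exact ha

private lemma Qstep_aux {R : Type*} [CommRing R] [DecidableEq R] {n : ℕ} {u : Fin n → R}
    (Q0 : ∀ (T : Finset (Fin n)) (j : Fin n), j ∉ T →
      ∀ a : R, u j * a ∈ Ideal.span ((T.image u : Finset R) : Set R) →
        a ∈ Ideal.span ((T.image u : Finset R) : Set R)) :
    ∀ (N : ℕ) (e : Fin n → ℕ) (T : Finset (Fin n)) (j : Fin n), j ∉ T →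
      (∀ i ∈ T, 1 ≤ e i) → (∑ i ∈ T, e i) ≤ N →
      ∀ a : R, u j * a ∈ Ideal.span ((T.image fun i => u i ^ e i : Finset R) : Set R) →
        a ∈ Ideal.span ((T.image fun i => u i ^ e i : Finset R) : Set R) := by
  intro N
  induction N using Nat.strong_induction_on with
  | _ N IH =>
  intro e T j hj he hsum a ha
  by_cases hall : ∀ i ∈ T, e i = 1
  · have himg : T.image (fun i => u i ^ e i) = T.image u :=
      Finset.image_congr fun i hi => by
        rw [hall i hi, pow_one]
    rw [himg] at ha ⊢
    exact Q0 T j hj a ha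
  · push_neg at hall
    obtain ⟨k, hkT, hk1⟩ := hall
    have hek : 2 ≤ e k := by have := he k hkT; omega
    have hkT' : k ∉ T.erase k := Finset.notMem_erase k T
    have hTins : T = insert k (T.erase k) := (Finset.insert_erase hkT).symm
    have hsum' : ∑ i ∈ T, e i = e k + ∑ i ∈ T.erase k, e i :=
      (Finset.add_sum_erase T e hkT).symm
    have hsumN : 2 + ∑ i ∈ T.erase k, e i ≤ N := by omega
    set J : Ideal R := Ideal.span ((T.erase k).image (fun i => u i ^ e i) : Set R) with hJdef
    have hspanT : Ideal.span ((T.image fun i => u i ^ e i : Finset R) : Set R)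
        = Ideal.span (insert (u k ^ e k)
            (((T.erase k).image fun i => u i ^ e i : Finset R) : Set R)) := by
      conv_lhs => rw [hTins]
      rw [Finset.image_insert, Finset.coe_insert]
    -- e' : decrease e k by one
    set e' : Fin n → ℕ := Function.update e k (e k - 1) with he'def
    have he'T : ∀ i ∈ T, 1 ≤ e' i := by
      intro i hi
      by_cases hik : i = k
      · subst hik; simp [he'def]; omega
      · simp [he'def, Function.update_of_ne hik]; exact he i hi
    have hsum'' : ∑ i ∈ T, e' i ≤ N - 1 := by
      have h1 : ∑ i ∈ T, e' i = e' k + ∑ i ∈ T.erase k, e' i :=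
        (Finset.add_sum_erase T e' hkT).symm
      have h2 : ∑ i ∈ T.erase k, e' i = ∑ i ∈ T.erase k, e i :=
        Finset.sum_congr rfl fun i hi => by
          rw [he'def, Function.update_of_ne (Finset.ne_of_mem_erase hi)]
      rw [h1, h2]
      simp only [he'def, Function.update_self]
      omega
    have himT' : (T.erase k).image (fun i => u i ^ e' i)
        = (T.erase k).image (fun i => u i ^ e i) := by
      apply Finset.image_congr
      intro i hi
      simp only [he'def, Function.update_of_ne (Finset.ne_of_mem_erase hi)]
    have hle : Ideal.span ((T.image fun i => u i ^ e i : Finset R) : Set R)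
        ≤ Ideal.span ((T.image fun i => u i ^ e' i : Finset R) : Set R) := by
      rw [Ideal.span_le]
      intro x hx
      simp only [Finset.coe_image, Set.mem_image, Finset.mem_coe] at hx
      obtain ⟨i, hi, rfl⟩ := hx
      by_cases hik : i = k
      · subst hik
        have hgen : u i ^ e' i ∈ Ideal.span ((T.image fun i => u i ^ e' i : Finset R) : Set R) :=
          Ideal.subset_span (by
            simp only [Finset.coe_image, Set.mem_image, Finset.mem_coe]
            exact ⟨i, hi, rfl⟩)
        have : u i ^ e i = u i ^ e' i * u i := by
          rw [he'def, Function.update_self, ← pow_succ]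
          congr 1; omega
        rw [this]
        exact Ideal.mul_mem_right _ _ hgen
      · have : u i ^ e i = u i ^ e' i := by
          rw [he'def, Function.update_of_ne hik]
        rw [this]
        exact Ideal.subset_span (by
          simp only [Finset.coe_image, Set.mem_image, Finset.mem_coe]
          exact ⟨i, hi, rfl⟩)
    have ha' : a ∈ Ideal.span ((T.image fun i => u i ^ e' i : Finset R) : Set R) :=
      IH (N - 1) (by omega) e' T j hj he'T hsum'' a (hle ha)
    have hrw : ((T.image fun i => u i ^ e' i : Finset R) : Set R)
        = insert (u k ^ (e k - 1))
            (((T.erase k).image fun i => u i ^ e i : Finset R) : Set R) := by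
      conv_lhs => rw [hTins]
      rw [Finset.image_insert, Finset.coe_insert, himT']
      congr 2
      rw [he'def, Function.update_self]
    rw [hrw, Ideal.mem_span_insert] at ha'
    obtain ⟨b, z, hz, hab⟩ := ha'
    -- u j * (b * u k ^ (e k - 1)) ∈ span(e, T)
    have step2 : u j * (b * u k ^ (e k - 1))
        ∈ Ideal.span ((T.image fun i => u i ^ e i : Finset R) : Set R) := by
      have h1 : u j * (b * u k ^ (e k - 1)) = u j * a - u j * z := by
        rw [hab]; ring
      rw [h1]
      refine sub_mem ha (Ideal.mul_mem_left _ _ ?_)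
      rw [hspanT]
      exact Ideal.mem_span_insert.mpr ⟨0, z, hz, by ring⟩
    rw [hspanT, Ideal.mem_span_insert] at step2
    obtain ⟨c, w, hw, hcw⟩ := step2
    have step3 : u k ^ (e k - 1) * (u j * b - c * u k) ∈ J := by
      have : u k ^ (e k - 1) * (u j * b - c * u k) = u j * (b * u k ^ (e k - 1)) - c * u k ^ e k := by
        have hpow : u k ^ e k = u k ^ (e k - 1) * u k := by
          rw [← pow_succ]; congr 1; omega
        rw [hpow]; ring
      rw [this, hcw]
      have h9 : c * u k ^ e k + w - c * u k ^ e k = w := by ring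
      rw [h9]; exact hw
    -- u k regular mod J (from IH with T.erase k), then power regular
    have hkreg : ∀ a : R, u k * a ∈ J → a ∈ J := by
      intro a' ha'
      exact IH (N - 1) (by omega) e (T.erase k) k hkT'
        (fun i hi => he i (Finset.mem_of_mem_erase hi)) (by omega) a' ha'
    have step4 : u j * b - c * u k ∈ J := pow_reg_aux hkreg (e k - 1) _ step3
    -- hence u j * b ∈ span (insert (u k) J-gens) = span(e'', T)
    set e'' : Fin n → ℕ := Function.update e k 1 with he''def
    have himT'' : (T.erase k).image (fun i => u i ^ e'' i)
        = (T.erase k).image (fun i => u i ^ e i) := by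
      apply Finset.image_congr
      intro i hi
      simp only [he''def, Function.update_of_ne (Finset.ne_of_mem_erase hi)]
    have hrw'' : ((T.image fun i => u i ^ e'' i : Finset R) : Set R)
        = insert (u k)
            (((T.erase k).image fun i => u i ^ e i : Finset R) : Set R) := by
      conv_lhs => rw [hTins]
      rw [Finset.image_insert, Finset.coe_insert, himT'']
      congr 2
      rw [he''def, Function.update_self, pow_one]
    have hjb : u j * b ∈ Ideal.span ((T.image fun i => u i ^ e'' i : Finset R) : Set R) := by
      rw [hrw'', Ideal.mem_span_insert]
      exact ⟨c, u j * b - c * u k, step4, by ring⟩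
    have he''T : ∀ i ∈ T, 1 ≤ e'' i := by
      intro i hi
      by_cases hik : i = k
      · subst hik; simp [he''def]
      · simp [he''def, Function.update_of_ne hik]; exact he i hi
    have hsum''' : ∑ i ∈ T, e'' i ≤ N - 1 := by
      have h1 : ∑ i ∈ T, e'' i = e'' k + ∑ i ∈ T.erase k, e'' i :=
        (Finset.add_sum_erase T e'' hkT).symm
      have h2 : ∑ i ∈ T.erase k, e'' i = ∑ i ∈ T.erase k, e i :=
        Finset.sum_congr rfl fun i hi => by
          rw [he''def, Function.update_of_ne (Finset.ne_of_mem_erase hi)]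
      rw [h1, h2]
      simp only [he''def, Function.update_self]
      omega
    have hb : b ∈ Ideal.span ((T.image fun i => u i ^ e'' i : Finset R) : Set R) :=
      IH (N - 1) (by omega) e'' T j hj he''T hsum''' b hjb
    rw [hrw'', Ideal.mem_span_insert] at hb
    obtain ⟨d, w', hw', hbw⟩ := hb
    -- conclude
    rw [hspanT, hab, hbw]
    have hgen : u k ^ e k ∈ Ideal.span (insert (u k ^ e k)
        (((T.erase k).image fun i => u i ^ e i : Finset R) : Set R)) :=
      Ideal.subset_span (Set.mem_insert _ _)
    have hJle : J ≤ Ideal.span (insert (u k ^ e k)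
        (((T.erase k).image fun i => u i ^ e i : Finset R) : Set R)) :=
      Ideal.span_mono (Set.subset_insert _ _)
    have hpow : u k * u k ^ (e k - 1) = u k ^ e k := by
      rw [← pow_succ']; congr 1; omega
    have : (d * u k + w') * u k ^ (e k - 1) + z
        = d * (u k * u k ^ (e k - 1)) + w' * u k ^ (e k - 1) + z := by ring
    rw [this, hpow]
    exact add_mem (add_mem (Ideal.mul_mem_left _ _ hgen)
      (Ideal.mul_mem_right _ _ (hJle hw'))) (hJle hz)

private lemma Cstep_aux {R : Type*} [CommRing R] [DecidableEq R] {n : ℕ} {u : Fin n → R}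
    (Q0 : ∀ (T : Finset (Fin n)) (j : Fin n), j ∉ T →
      ∀ a : R, u j * a ∈ Ideal.span ((T.image u : Finset R) : Set R) →
        a ∈ Ideal.span ((T.image u : Finset R) : Set R))
    (t : ℕ) (ht : 2 ≤ t) :
    ∀ (P D : Finset (Fin n)), Disjoint P D → ∀ s : R,
      s * ∏ i ∈ P, u i ∈ Ideal.span
        ((P.image (fun i => u i ^ t) ∪ D.image (fun i => u i ^ (t-1)) : Finset R) : Set R) →
      s ∈ Ideal.span (((P ∪ D).image fun i => u i ^ (t-1) : Finset R) : Set R) := by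
  have Q : ∀ (e : Fin n → ℕ) (T : Finset (Fin n)) (j : Fin n), j ∉ T →
      (∀ i ∈ T, 1 ≤ e i) →
      ∀ a : R, u j * a ∈ Ideal.span ((T.image fun i => u i ^ e i : Finset R) : Set R) →
        a ∈ Ideal.span ((T.image fun i => u i ^ e i : Finset R) : Set R) :=
    fun e T j hj he => Qstep_aux Q0 (∑ i ∈ T, e i) e T j hj he le_rfl
  intro P
  induction P using Finset.induction_on with
  | empty =>
      intro D _ s hs
      simpa using hs
  | @insert j P' hjP' IH =>
      intro D hdisj s hs
      have hjD : j ∉ D := Finset.disjoint_left.mp hdisj (Finset.mem_insert_self j P')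
      have hP'D : Disjoint P' D :=
        Finset.disjoint_of_subset_left (Finset.subset_insert j P') hdisj
      rw [Finset.prod_insert hjP'] at hs
      rw [Finset.image_insert, Finset.insert_union, Finset.coe_insert] at hs
      rw [Ideal.mem_span_insert] at hs
      obtain ⟨c, z, hz, hcz⟩ := hs
      -- u j * (s * ∏_{P'} u - c * u j^(t-1)) ∈ span G
      have hG : u j * (s * ∏ i ∈ P', u i - c * u j ^ (t-1)) ∈ Ideal.span
          ((P'.image (fun i => u i ^ t) ∪ D.image (fun i => u i ^ (t-1)) : Finset R) : Set R) := by
        have h1 : u j * (s * ∏ i ∈ P', u i - c * u j ^ (t-1))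
            = s * (u j * ∏ i ∈ P', u i) - c * u j ^ t := by
          have hp : u j ^ t = u j * u j ^ (t - 1) := by
            rw [← pow_succ']; congr 1; omega
          rw [hp]; ring
        rw [h1, hcz]
        have h2 : c * u j ^ t + z - c * u j ^ t = z := by ring
        rw [h2]; exact hz
      -- identify span G with an image over P' ∪ D of an exponent function
      set e : Fin n → ℕ := fun i => if i ∈ P' then t else t - 1 with hedef
      have hT : (P' ∪ D).image (fun i => u i ^ e i)
          = P'.image (fun i => u i ^ t) ∪ D.image (fun i => u i ^ (t-1)) := by
        rw [Finset.image_union]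
        congr 1
        · apply Finset.image_congr
          intro i hi
          simp only [hedef, if_pos (by simpa using hi)]
        · apply Finset.image_congr
          intro i hi
          have hiP' : i ∉ P' := Finset.disjoint_right.mp hP'D (by simpa using hi)
          simp only [hedef, if_neg hiP']
      have hjT : j ∉ P' ∪ D := by
        simp [hjP', hjD]
      have he1 : ∀ i ∈ P' ∪ D, 1 ≤ e i := by
        intro i _
        simp only [hedef]
        split <;> omega
      have hstep := Q e (P' ∪ D) j hjT he1 _ (by rw [hT]; exact hG)
      rw [hT] at hstep
      -- s * ∏_{P'} u ∈ span (insert (u j^(t-1)) G)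
      have hs2 : s * ∏ i ∈ P', u i ∈ Ideal.span
          ((P'.image (fun i => u i ^ t) ∪ (insert j D).image (fun i => u i ^ (t-1))
            : Finset R) : Set R) := by
        rw [Finset.image_insert, Finset.union_insert, Finset.coe_insert]
        rw [Ideal.mem_span_insert]
        exact ⟨c, _, hstep, by ring⟩
      have hdisj2 : Disjoint P' (insert j D) := by
        rw [Finset.disjoint_insert_right]
        exact ⟨hjP', hP'D⟩
      have := IH (insert j D) hdisj2 s hs2
      rwa [Finset.union_insert, ← Finset.insert_union] at this

private lemma mainColon_aux {R : Type*} [CommRing R] [DecidableEq R] {n : ℕ} {u : Fin n → R}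
    (Q0 : ∀ (T : Finset (Fin n)) (j : Fin n), j ∉ T →
      ∀ a : R, u j * a ∈ Ideal.span ((T.image u : Finset R) : Set R) →
        a ∈ Ideal.span ((T.image u : Finset R) : Set R)) :
    ∀ (t : ℕ), 1 ≤ t → ∀ r : R,
      (∏ i, u i) ^ (t-1) * r ∈ Ideal.span (Set.range fun i => u i ^ t) →
      r ∈ Ideal.span (Set.range u) := by
  have hrange : ∀ f : Fin n → R, Set.range f = ((Finset.univ.image f : Finset R) : Set R) := by
    intro f
    simp [Finset.coe_image]
  intro t
  induction t using Nat.strong_induction_on with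
  | _ t IHt =>
  intro ht r hr
  rcases eq_or_lt_of_le ht with h1 | h2
  · -- t = 1
    have : (∏ i, u i) ^ (t-1) * r = r := by
      rw [← h1]; simp
    rw [this] at hr
    have : Set.range (fun i => u i ^ t) = Set.range u := by
      rw [← h1]; simp
    rwa [this] at hr
  · -- t ≥ 2
    have ht2 : 2 ≤ t := h2
    set s : R := (∏ i, u i) ^ (t-2) * r with hsdef
    have hmul : s * ∏ i, u i = (∏ i, u i) ^ (t-1) * r := by
      have : (t : ℕ) - 1 = (t-2) + 1 := by omega
      rw [this, pow_succ]; ring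
    have hsmem : s * ∏ i, u i ∈ Ideal.span
        (((Finset.univ.image (fun i => u i ^ t) ∪
          (∅ : Finset (Fin n)).image (fun i => u i ^ (t-1))) : Finset R) : Set R) := by
      rw [hmul]
      simpa [← hrange] using hr
    have := Cstep_aux Q0 t ht2 Finset.univ ∅ (Finset.disjoint_empty_right _) s hsmem
    rw [Finset.union_empty, ← hrange] at this
    have hrec : (∏ i, u i) ^ ((t-1)-1) * r ∈ Ideal.span (Set.range fun i => u i ^ (t-1)) := by
      have h3 : (t-1) - 1 = t - 2 := by omega
      rw [h3]
      exact this
    exact IHt (t-1) (by omega) (by omega) r hrec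

private lemma Q0_aux {R : Type*} [CommRing R] [DecidableEq R] [IsLocalRing R]
    [IsNoetherianRing R] {n : ℕ} {u : Fin n → R} (hu : ∀ i, u i ∈ maximalIdeal R)
    (hureg : RingTheory.Sequence.IsWeaklyRegular R (List.ofFn u)) :
    ∀ (T : Finset (Fin n)) (j : Fin n), j ∉ T →
      ∀ a : R, u j * a ∈ Ideal.span ((T.image u : Finset R) : Set R) →
        a ∈ Ideal.span ((T.image u : Finset R) : Set R) := by
  intro T j hj a ha
  set l₁ : List R := T.toList.map u with hl₁
  set l₂ : List R := ((Finset.univ \ insert j T).toList).map u with hl₂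
  have hperm0 : (List.finRange n).Perm
      (T.toList ++ j :: (Finset.univ \ insert j T).toList) := by
    rw [List.perm_ext_iff_of_nodup (List.nodup_finRange n) ?_]
    · intro a
      simp only [List.mem_finRange, true_iff, List.mem_append, Finset.mem_toList,
        List.mem_cons, Finset.mem_sdiff, Finset.mem_univ, Finset.mem_insert, true_and]
      by_cases h1 : a = j
      · tauto
      · by_cases h2 : a ∈ T <;> tauto
    · refine List.Nodup.append (Finset.nodup_toList T) ?_ ?_
      · rw [List.nodup_cons]
        refine ⟨?_, Finset.nodup_toList _⟩
        simp
      · intro a haT hacons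
        rw [Finset.mem_toList] at haT
        rcases List.mem_cons.mp hacons with h1 | h1
        · exact hj (h1 ▸ haT)
        · rw [Finset.mem_toList, Finset.mem_sdiff] at h1
          exact h1.2 (Finset.mem_insert_of_mem haT)
  have hperm : (List.ofFn u).Perm (l₁ ++ u j :: l₂) := by
    rw [List.ofFn_eq_map, hl₁, hl₂]
    have h5 := hperm0.map u
    simpa using h5
  have hmem : ∀ r ∈ List.ofFn u, r ∈ maximalIdeal R := by
    intro r hr
    rw [List.mem_ofFn] at hr
    obtain ⟨i, rfl⟩ := hr
    exact hu i
  have hwr := IsLocalRing.isWeaklyRegular_of_perm_of_subset_maximalIdeal hureg hperm hmem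
  rw [RingTheory.Sequence.isWeaklyRegular_append_iff] at hwr
  have h2 := hwr.2
  rw [RingTheory.Sequence.isWeaklyRegular_cons_iff] at h2
  have hreg1 := h2.1
  -- identify the ideal
  have hid : Ideal.ofList l₁ = Ideal.span ((T.image u : Finset R) : Set R) := by
    unfold Ideal.ofList
    congr 1
    ext x
    simp [hl₁, Finset.mem_toList, eq_comm]
  have hsmul : (Ideal.ofList l₁ • ⊤ : Submodule R R)
      = (Ideal.span ((T.image u : Finset R) : Set R) : Submodule R R) := by
    rw [hid]
    simp [Ideal.smul_top_eq_map]
  -- use regularity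
  have hmk : (Submodule.Quotient.mk (u j * a) :
      R ⧸ (Ideal.ofList l₁ • ⊤ : Submodule R R)) = 0 := by
    rw [Submodule.Quotient.mk_eq_zero, hsmul]
    exact ha
  have : (u j) • (Submodule.Quotient.mk a :
      R ⧸ (Ideal.ofList l₁ • ⊤ : Submodule R R)) = (u j) • (0 : _) := by
    rw [smul_zero, ← Submodule.Quotient.mk_smul, smul_eq_mul]
    exact hmk
  have hz := hreg1 this
  have hmem2 : a ∈ (Ideal.ofList l₁ • ⊤ : Submodule R R) := by
    rwa [Submodule.Quotient.mk_eq_zero] at hz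
  rwa [hsmul] at hmem2

/-- The bracket power `J^{[q]}` of an ideal `J`: the ideal generated by the
`q`-th powers of the elements of `J`. -/
def Ideal.bracketPow {R : Type*} [CommRing R] (J : Ideal R) (q : ℕ) : Ideal R :=
  Ideal.span ((fun a => a ^ q) '' (J : Set R))

/-- A Noetherian local ring is regular if its maximal ideal can be generated by
`d` elements, where `d` is the Krull dimension of the ring. -/
def IsRegularLocal (R : Type*) [CommRing R] [IsLocalRing R] : Prop :=
  IsNoetherianRing R ∧ ∃ s : Finset R,
    Ideal.span (s : Set R) = maximalIdeal R ∧ (s.card : WithBot ℕ∞) = ringKrullDim R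

/-- `I ∈ 𝓘(R, 𝐮)`: the ideal `I` contains `𝐮R = (u₁, …, uₙ)R` and satisfies
`u^(p-1)·(I + 𝐮R) ⊆ I^{[p]} + 𝐮^p R`, where `u = u₁⋯uₙ`. -/
def MemCalI {R : Type*} [CommRing R] (p : ℕ) {n : ℕ} (u : Fin n → R) (I : Ideal R) : Prop :=
  Ideal.span (Set.range u) ≤ I ∧
    ∀ r ∈ I ⊔ Ideal.span (Set.range u),
      (∏ i, u i) ^ (p - 1) * r ∈ I.bracketPow p ⊔ Ideal.span (Set.range fun i => u i ^ p)

/-- For every `I ∈ 𝓘(R, 𝐮)`, multiplication by `u^(p-1)` induces a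
well-defined injective `R`-module homomorphism
`(I + 𝐮R)/𝐮R → (I^{[p]} + 𝐮^p R)/𝐮^p R`, sending the class of `r` modulo `𝐮R` to the
class of `u^(p-1)·r` modulo `𝐮^p R`. -/
theorem statement1 {R : Type*} [CommRing R] [IsLocalRing R]
    (p : ℕ) (hp : p.Prime) [CharP R p] (hreg : IsRegularLocal R)
    {n : ℕ} (u : Fin n → R) (hu : ∀ i, u i ∈ maximalIdeal R)
    (hureg : RingTheory.Sequence.IsRegular R (List.ofFn u))
    (I : Ideal R) (hI : MemCalI p u I) :
    ∃ φ : ↥(Submodule.map (Ideal.span (Set.range u)).mkQ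
            (I ⊔ Ideal.span (Set.range u) : Ideal R)) →ₗ[R]
          ↥(Submodule.map (Ideal.span (Set.range fun i => u i ^ p)).mkQ
            (I.bracketPow p ⊔ Ideal.span (Set.range fun i => u i ^ p) : Ideal R)),
      Function.Injective φ ∧
        ∀ (r : R) (hr : r ∈ I ⊔ Ideal.span (Set.range u))
          (hr' : (∏ i, u i) ^ (p - 1) * r ∈
            I.bracketPow p ⊔ Ideal.span (Set.range fun i => u i ^ p)),
          φ ⟨(Ideal.span (Set.range u)).mkQ r, Submodule.mem_map_of_mem hr⟩ =
            ⟨(Ideal.span (Set.range fun i => u i ^ p)).mkQ ((∏ i, u i) ^ (p - 1) * r),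
              Submodule.mem_map_of_mem hr'⟩ := by
  classical
  haveI : IsNoetherianRing R := hreg.1
  have hp1 : 1 ≤ p := hp.pos
  set c : R := (∏ i, u i) ^ (p - 1) with hc
  set J1 : Ideal R := Ideal.span (Set.range u) with hJ1
  set Jp : Ideal R := Ideal.span (Set.range fun i => u i ^ p) with hJp
  -- key: c * r ∈ Jp → r ∈ J1
  have Q0 := Q0_aux hu hureg.toIsWeaklyRegular
  have key : ∀ r : R, c * r ∈ Jp → r ∈ J1 :=
    fun r hr => mainColon_aux Q0 p hp.one_lt.le r hr
  -- c • J1 ⊆ Jp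
  have hcJ1 : ∀ x ∈ J1, c * x ∈ Jp := by
    intro x hx
    refine Submodule.span_induction ?_ ?_ ?_ ?_ hx
    · rintro y ⟨i, rfl⟩
      have hgen : u i ^ p ∈ Jp := Ideal.subset_span ⟨i, rfl⟩
      have hsplit : c * u i = u i ^ p * (∏ j ∈ Finset.univ.erase i, u j) ^ (p - 1) := by
        rw [hc, ← Finset.prod_erase_mul Finset.univ u (Finset.mem_univ i), mul_pow]
        rw [mul_comm ((∏ j ∈ Finset.univ.erase i, u j) ^ (p-1)) (u i ^ (p-1))]
        rw [mul_assoc, mul_comm ((∏ j ∈ Finset.univ.erase i, u j) ^ (p-1)) (u i)]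
        rw [← mul_assoc, ← pow_succ]
        congr 2
        omega
      rw [hsplit]
      exact Ideal.mul_mem_right _ _ hgen
    · simp
    · intro y z _ _ hy hz
      rw [mul_add]
      exact add_mem hy hz
    · intro a y _ hy
      rw [smul_eq_mul]
      have h6 : c * (a * y) = a * (c * y) := by ring
      rw [h6]
      exact Ideal.mul_mem_left _ _ hy
  -- the lifted map ψ : R⧸J1 → R⧸Jp
  set f : R →ₗ[R] R ⧸ Jp := Jp.mkQ.comp (LinearMap.lsmul R R c) with hf
  have hker : J1 ≤ LinearMap.ker f := by
    intro x hx
    simp only [hf, LinearMap.mem_ker, LinearMap.comp_apply, LinearMap.lsmul_apply,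
      Submodule.mkQ_apply, smul_eq_mul, Submodule.Quotient.mk_eq_zero]
    exact hcJ1 x hx
  set psi : (R ⧸ J1) →ₗ[R] R ⧸ Jp := Submodule.liftQ J1 f hker with hpsi
  have hpsi_mk : ∀ r : R, psi (J1.mkQ r) = Jp.mkQ (c * r) := by
    intro r
    rw [hpsi, Submodule.mkQ_apply, Submodule.liftQ_apply, hf]
    simp [smul_eq_mul]
  have hmaps : ∀ x ∈ Submodule.map J1.mkQ (I ⊔ J1 : Ideal R), psi x ∈
      Submodule.map Jp.mkQ (I.bracketPow p ⊔ Jp : Ideal R) := by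
    rintro x ⟨r, hr, rfl⟩
    rw [hpsi_mk]
    exact Submodule.mem_map_of_mem (hI.2 r hr)
  refine ⟨psi.restrict hmaps, ?_, ?_⟩
  · rw [← LinearMap.ker_eq_bot, LinearMap.ker_eq_bot']
    rintro ⟨x, hx⟩ h0
    obtain ⟨r, hr, rfl⟩ := hx
    have h1 : psi (J1.mkQ r) = 0 := by
      have := congrArg Subtype.val h0
      rwa [LinearMap.restrict_apply] at this
    rw [hpsi_mk, Submodule.mkQ_apply, Submodule.Quotient.mk_eq_zero] at h1
    have h2 : r ∈ J1 := key r h1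
    apply Subtype.ext
    show J1.mkQ r = 0
    rw [Submodule.mkQ_apply, Submodule.Quotient.mk_eq_zero]
    exact h2
  · intro r hr hr'
    apply Subtype.ext
    rw [LinearMap.restrict_apply]
    exact hpsi_mk r
end

section
/- For every I ∈ 𝓘(R,𝐮) and every integer e ≥ 1, one has u^{p^e−1}·(I + 𝐮R) ⊆ I^{[p^e]} + 𝐮^{p^e} R (note that p^e − 1 = (p−1)(1 + p + ⋯ + p^{e−1})). -/
open IsLocalRing

/-- For every `I ∈ 𝓘(R, 𝐮)` and every `e ≥ 1` one has
`u^(p^e - 1)·(I + 𝐮R) ⊆ I^{[p^e]} + 𝐮^(p^e) R`. -/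
theorem statement2 {R : Type*} [CommRing R] [IsLocalRing R]
    (p : ℕ) (hp : p.Prime) [CharP R p] (hreg : IsRegularLocal R)
    {n : ℕ} (u : Fin n → R) (hu : ∀ i, u i ∈ maximalIdeal R)
    (hureg : RingTheory.Sequence.IsRegular R (List.ofFn u))
    (I : Ideal R) (hI : MemCalI p u I) :
    ∀ e : ℕ, 1 ≤ e → ∀ r ∈ I ⊔ Ideal.span (Set.range u),
      (∏ i, u i) ^ (p ^ e - 1) * r ∈
        I.bracketPow (p ^ e) ⊔ Ideal.span (Set.range fun i => u i ^ p ^ e) := by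
  haveI : Fact p.Prime := ⟨hp⟩
  haveI : ExpChar R p := ExpChar.prime hp
  have hp1 : 1 ≤ p := hp.one_lt.le
  set v : R := ∏ i, u i with hv
  -- Frobenius step: p-th powers of T e land in T (e+1)
  have frob_step : ∀ e : ℕ, ∀ z ∈ I.bracketPow (p ^ e) ⊔ Ideal.span (Set.range fun i => u i ^ p ^ e),
      z ^ p ∈ I.bracketPow (p ^ (e + 1)) ⊔ Ideal.span (Set.range fun i => u i ^ p ^ (e + 1)) := by
    intro e z hz
    have h1 : (frobenius R p) z ∈ Ideal.map (frobenius R p)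
        (I.bracketPow (p ^ e) ⊔ Ideal.span (Set.range fun i => u i ^ p ^ e)) :=
      Ideal.mem_map_of_mem _ hz
    rw [Ideal.map_sup] at h1
    have e1 : Ideal.map (frobenius R p) (I.bracketPow (p ^ e)) ≤ I.bracketPow (p ^ (e + 1)) := by
      rw [Ideal.bracketPow, Ideal.map_span, ← Set.image_comp]
      apply Ideal.span_mono
      rintro _ ⟨a, ha, rfl⟩
      exact ⟨a, ha, by simp [frobenius_def, ← pow_mul, pow_succ]⟩
    have e2 : Ideal.map (frobenius R p) (Ideal.span (Set.range fun i => u i ^ p ^ e)) ≤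
        Ideal.span (Set.range fun i => u i ^ p ^ (e + 1)) := by
      rw [Ideal.map_span, ← Set.range_comp]
      apply Ideal.span_mono
      rintro _ ⟨i, rfl⟩
      exact ⟨i, by simp [frobenius_def, ← pow_mul, pow_succ]⟩
    have := sup_le_sup e1 e2 h1
    rwa [frobenius_def] at this
  intro e he
  induction e, he using Nat.le_induction with
  | base =>
    intro r hr
    simpa [pow_one] using hI.2 r hr
  | succ e he ih =>
    intro r hr
    have hexp : p ^ (e + 1) - 1 = p * (p ^ e - 1) + (p - 1) := by
      have h1 : 1 ≤ p ^ e := Nat.one_le_pow _ _ hp.pos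
      have h2 : p ^ (e + 1) = p * p ^ e := by ring
      have h3 : p * (p ^ e - 1) = p * p ^ e - p := by
        rw [Nat.mul_sub, mul_one]
      have h4 : p ≤ p * p ^ e := Nat.le_mul_of_pos_right _ h1
      rw [h2, h3]
      omega
    have key : v ^ (p ^ (e + 1) - 1) * r = v ^ (p * (p ^ e - 1)) * (v ^ (p - 1) * r) := by
      rw [hexp, pow_add, mul_assoc]
    rw [key]
    have h0 := hI.2 r hr
    -- now span induction over the sup
    rw [Ideal.bracketPow, ← Ideal.span_union] at h0
    refine Submodule.span_induction ?_ ?_ ?_ ?_ h0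
    · rintro x (⟨a, ha, rfl⟩ | ⟨i, rfl⟩)
      · have hx : v ^ (p ^ e - 1) * a ∈
            I.bracketPow (p ^ e) ⊔ Ideal.span (Set.range fun i => u i ^ p ^ e) :=
          ih a (Ideal.mem_sup_left ha)
        have := frob_step e _ hx
        rw [mul_pow, ← pow_mul, Nat.mul_comm (p ^ e - 1) p] at this
        exact this
      · have hui : u i ∈ I ⊔ Ideal.span (Set.range u) :=
          Ideal.mem_sup_right (Ideal.subset_span ⟨i, rfl⟩)
        have hx := ih (u i) hui
        have := frob_step e _ hx
        rw [mul_pow, ← pow_mul, Nat.mul_comm (p ^ e - 1) p] at this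
        exact this
    · simp
    · intro x y _ _ hx hy
      rw [mul_add]; exact Ideal.add_mem _ hx hy
    · intro c x _ hx
      rw [smul_eq_mul, mul_left_comm]
      exact Ideal.mul_mem_left _ _ hx
end

section
/- Let L be any ideal of R. If u^{p^e−1} ∈ L^{[p^e]} + 𝐮^{p^e} R for some integer e ≥ 1, then u^{p^{e'}−1} ∈ L^{[p^{e'}]} + 𝐮^{p^{e'}} R for every integer e' ≥ e. -/
open IsLocalRing

private lemma bracketPow_frob {R : Type*} [CommRing R]
    (p : ℕ) (hp : p.Prime) [CharP R p]
    (L : Ideal R) (q : ℕ) {x : R} (hx : x ∈ L.bracketPow q) :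
    x ^ p ∈ L.bracketPow (q * p) := by
  haveI : Fact p.Prime := ⟨hp⟩
  induction hx using Submodule.span_induction with
  | mem y hy =>
    obtain ⟨a, ha, rfl⟩ := hy
    exact Ideal.subset_span ⟨a, ha, by rw [← pow_mul]⟩
  | zero => simpa [zero_pow hp.ne_zero] using (Ideal.zero_mem (L.bracketPow (q * p)))
  | add x y hx hy hx' hy' => rw [add_pow_char]; exact add_mem hx' hy'
  | smul r x hx hx' => rw [smul_eq_mul, mul_pow]; exact Ideal.mul_mem_left _ _ hx'

private lemma spanRange_frob {R : Type*} [CommRing R]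
    (p : ℕ) (hp : p.Prime) [CharP R p]
    {n : ℕ} (u : Fin n → R) (q : ℕ) {x : R}
    (hx : x ∈ Ideal.span (Set.range fun i => u i ^ q)) :
    x ^ p ∈ Ideal.span (Set.range fun i => u i ^ (q * p)) := by
  haveI : Fact p.Prime := ⟨hp⟩
  induction hx using Submodule.span_induction with
  | mem y hy =>
    obtain ⟨i, rfl⟩ := hy
    exact Ideal.subset_span ⟨i, by rw [← pow_mul]⟩
  | zero => simpa [zero_pow hp.ne_zero] using
      (Ideal.zero_mem (Ideal.span (Set.range fun i => u i ^ (q * p))))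
  | add x y hx hy hx' hy' => rw [add_pow_char]; exact add_mem hx' hy'
  | smul r x hx hx' => rw [smul_eq_mul, mul_pow]; exact Ideal.mul_mem_left _ _ hx'

/-- Let `L` be any ideal of `R`.  If
`u^(p^e - 1) ∈ L^{[p^e]} + 𝐮^(p^e) R` for some `e ≥ 1`, then
`u^(p^e' - 1) ∈ L^{[p^e']} + 𝐮^(p^e') R` for every `e' ≥ e`. -/
theorem statement3 {R : Type*} [CommRing R] [IsLocalRing R]
    (p : ℕ) (hp : p.Prime) [CharP R p] (hreg : IsRegularLocal R)
    {n : ℕ} (u : Fin n → R) (hu : ∀ i, u i ∈ maximalIdeal R)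
    (hureg : RingTheory.Sequence.IsRegular R (List.ofFn u))
    (L : Ideal R) (e : ℕ) (he : 1 ≤ e)
    (h : (∏ i, u i) ^ (p ^ e - 1) ∈
      L.bracketPow (p ^ e) ⊔ Ideal.span (Set.range fun i => u i ^ p ^ e)) :
    ∀ e' : ℕ, e ≤ e' → (∏ i, u i) ^ (p ^ e' - 1) ∈
      L.bracketPow (p ^ e') ⊔ Ideal.span (Set.range fun i => u i ^ p ^ e') := by
  haveI : Fact p.Prime := ⟨hp⟩
  intro e' he'
  induction e', he' using Nat.le_induction with
  | base => exact h
  | succ k hk ih =>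
    rw [Submodule.mem_sup] at ih
    obtain ⟨a, ha, b, hb, hab⟩ := ih
    have h1 : 1 ≤ p ^ k := Nat.one_le_pow _ _ hp.pos
    have h2 : 1 ≤ p ^ (k + 1) := Nat.one_le_pow _ _ hp.pos
    have h3 : 1 ≤ p := hp.one_le
    have hexp : p ^ (k + 1) - 1 = (p ^ k - 1) * p + (p - 1) := by
      zify [h1, h2, h3]; ring
    have key : (∏ i, u i) ^ (p ^ (k + 1) - 1)
        = ((∏ i, u i) ^ (p ^ k - 1)) ^ p * (∏ i, u i) ^ (p - 1) := by
      rw [← pow_mul, ← pow_add, hexp]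
    rw [key, ← hab, add_pow_char, add_mul]
    have hps : p ^ k * p = p ^ (k + 1) := (pow_succ p k).symm
    apply Ideal.add_mem
    · exact Ideal.mem_sup_left (Ideal.mul_mem_right _ _
        (hps ▸ bracketPow_frob p hp L (p ^ k) ha))
    · exact Ideal.mem_sup_right (Ideal.mul_mem_right _ _
        (hps ▸ spanRange_frob p hp u (p ^ k) hb))
end

section
/- Let M be a T-torsion-free A[T;f]-module, let K be an ideal of A, and let α ≥ 0 be an integer. Then the following are equivalent: (i) a·T^i(m) = 0 for all a ∈ K, all i ≥ 0 and all m ∈ M; (ii) a·T^i(m') = 0 for all a ∈ K, all i ≥ 0 and all m' in the A-submodule of M generated by T^α(M). In particular, if a·T^{α+i}(m) = 0 for all a ∈ K, i ≥ 0 and m ∈ M, then a·T^i(m) = 0 for all a ∈ K, i ≥ 0 and m ∈ M. -/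
/-- Let `A` be a commutative ring of prime characteristic `p` and let
`M` be a `T`-torsion-free `A[T;f]`-module, i.e. an `A`-module together with an additive
map `T : M → M` satisfying `T (a • m) = a^p • T m`, such that `T m = 0 → m = 0`.
Let `K` be an ideal of `A` and `α ≥ 0`.  Then the following are equivalent:
(i) `a • T^i m = 0` for all `a ∈ K`, `i ≥ 0`, `m ∈ M`;
(ii) `a • T^i m' = 0` for all `a ∈ K`, `i ≥ 0` and all `m'` in the `A`-submodule of `M`
generated by `T^α(M)`.
In particular, if `a • T^(α+i) m = 0` for all `a ∈ K`, `i ≥ 0`, `m ∈ M`, then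
`a • T^i m = 0` for all `a ∈ K`, `i ≥ 0`, `m ∈ M`. -/
theorem statement4 {A : Type*} [CommRing A] (p : ℕ) (hp : p.Prime) [CharP A p]
    {M : Type*} [AddCommGroup M] [Module A M] (T : M →+ M)
    (hT : ∀ (a : A) (m : M), T (a • m) = a ^ p • T m)
    (htf : ∀ m : M, T m = 0 → m = 0)
    (K : Ideal A) (α : ℕ) :
    ((∀ a ∈ K, ∀ i : ℕ, ∀ m : M, a • (⇑T)^[i] m = 0) ↔
      (∀ a ∈ K, ∀ i : ℕ,
        ∀ m' ∈ Submodule.span A (Set.range ((⇑T)^[α])), a • (⇑T)^[i] m' = 0)) ∧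
    ((∀ a ∈ K, ∀ i : ℕ, ∀ m : M, a • (⇑T)^[α + i] m = 0) →
      ∀ a ∈ K, ∀ i : ℕ, ∀ m : M, a • (⇑T)^[i] m = 0) := by
  -- descent lemma: if the vanishing holds from level β on, it holds everywhere
  have descent : ∀ β : ℕ, (∀ a ∈ K, ∀ i : ℕ, ∀ m : M, a • (⇑T)^[β + i] m = 0) →
      ∀ a ∈ K, ∀ i : ℕ, ∀ m : M, a • (⇑T)^[i] m = 0 := by
    intro β
    induction β with
    | zero => intro h a ha i m; simpa using h a ha i m
    | succ β ih =>
      intro h a ha i m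
      refine ih (fun a ha i m => ?_) a ha i m
      apply htf
      rw [hT, ← Function.iterate_succ_apply' T (β + i) m]
      have := h (a ^ p) (K.pow_mem_of_mem ha p hp.pos) i m
      rwa [show β + 1 + i = β + i + 1 by omega] at this
  constructor
  · constructor
    · intro h a ha i m' _
      exact h a ha i m'
    · intro h
      refine descent α (fun a ha i m => ?_)
      have := h a ha i ((⇑T)^[α] m)
        (Submodule.subset_span (Set.mem_range_self m))
      rwa [← Function.iterate_add_apply, Nat.add_comm i α] at this
  · exact descent α
end

section
/- Let A be a complete Noetherian local ring of prime characteristic p, let H be a T-torsion-free A[T;f]-module, and let I, J be ideals of A. If for some integer α ≥ 0 the A-submodule of H generated by T^α(Ann_H(I·A[T;f])) equals the A-submodule of H generated by T^α(Ann_H(J·A[T;f])), then Ann_H(I·A[T;f]) = Ann_H(J·A[T;f]). -/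
open IsLocalRing

/-- For an `A[T;f]`-module `H` (given by the additive map `T : H → H`) and an ideal
`I ⊆ A`, this is the annihilator `Ann_H (I·A[T;f]) = {h ∈ H : a • T^i h = 0` for all
`a ∈ I`, `i ≥ 0}`. -/
def annTf {A : Type*} [CommRing A] {H : Type*} [AddCommGroup H] [Module A H]
    (T : H →+ H) (I : Ideal A) : Set H :=
  {h : H | ∀ a ∈ I, ∀ i : ℕ, a • (⇑T)^[i] h = 0}

/-!
Since `T` is `p`-linear, `T^α (a • x) = a ^ p ^ α • T^α x`, and `a ^ p ^ α` lies in every ideal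
containing `a`. Hence `T^α` maps `Ann_H(J·A[T;f])` into itself, and this set is an `A`-submodule,
so the span of `T^α(Ann_H(I·A[T;f]))` lies in `Ann_H(J·A[T;f])`. For `x` in `Ann_H(I·A[T;f])`
and `a ∈ J` this gives `T^α (a • T^i x) = a ^ p ^ α • T^(i+α) x = 0`, and `T`-torsion-freeness
yields `a • T^i x = 0`.
-/

section

variable {A : Type*} [CommRing A] {H : Type*} [AddCommGroup H] [Module A H]
  (T : H →+ H) {p : ℕ} (hT : ∀ (a : A) (h : H), T (a • h) = a ^ p • T h)
include hT

theorem iterate_map_smul_eq_pow_smul (n : ℕ) (a : A) (h : H) :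
    (⇑T)^[n] (a • h) = a ^ p ^ n • (⇑T)^[n] h := by
  induction n with
  | zero => simp
  | succ n ih =>
    rw [Function.iterate_succ_apply', Function.iterate_succ_apply', ih, hT, ← pow_mul,
      ← pow_succ]

def annTfSubmodule (J : Ideal A) : Submodule A H where
  carrier := annTf T J
  zero_mem' a _ i := by rw [iterate_map_zero, smul_zero]
  add_mem' hx hy a ha i := by rw [iterate_map_add, smul_add, hx a ha i, hy a ha i, add_zero]
  smul_mem' c x hx a ha i := by
    rw [iterate_map_smul_eq_pow_smul T hT, smul_comm, hx a ha i, smul_zero]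

omit hT in
theorem iterate_image_annTf_subset (J : Ideal A) (α : ℕ) :
    (⇑T)^[α] '' annTf T J ⊆ annTf T J := by
  rintro _ ⟨x, hx, rfl⟩ a ha i
  rw [← Function.iterate_add_apply]
  exact hx a ha (i + α)

theorem annTf_subset_of_span_iterate_image_le (hp : 0 < p)
    (htf : ∀ h : H, T h = 0 → h = 0) (I J : Ideal A) (α : ℕ)
    (hle : Submodule.span A ((⇑T)^[α] '' annTf T I) ≤
      Submodule.span A ((⇑T)^[α] '' annTf T J)) :
    annTf T I ⊆ annTf T J := by
  intro x hx a ha i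
  have hspan_le : Submodule.span A ((⇑T)^[α] '' annTf T J) ≤ annTfSubmodule T hT J :=
    Submodule.span_le.mpr (iterate_image_annTf_subset T J α)
  have hTαx : (⇑T)^[α] x ∈ annTf T J :=
    hspan_le (hle (Submodule.subset_span ⟨x, hx, rfl⟩))
  have hinj : Function.Injective (⇑T)^[α] :=
    ((injective_iff_map_eq_zero T).mpr htf).iterate α
  apply hinj
  rw [iterate_map_zero, iterate_map_smul_eq_pow_smul T hT, ← Function.iterate_add_apply,
    Nat.add_comm, Function.iterate_add_apply]
  exact hTαx _ (J.pow_mem_of_mem ha _ (pow_pos hp α)) i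

end

theorem statement5_general {A : Type*} [CommRing A] (p : ℕ) (hp : p.Prime)
    {H : Type*} [AddCommGroup H] [Module A H] (T : H →+ H)
    (hT : ∀ (a : A) (h : H), T (a • h) = a ^ p • T h)
    (htf : ∀ h : H, T h = 0 → h = 0)
    (I J : Ideal A) (α : ℕ)
    (hspan : Submodule.span A ((⇑T)^[α] '' annTf T I) =
      Submodule.span A ((⇑T)^[α] '' annTf T J)) :
    annTf T I = annTf T J :=
  (annTf_subset_of_span_iterate_image_le T hT hp.pos htf I J α hspan.le).antisymm
    (annTf_subset_of_span_iterate_image_le T hT hp.pos htf J I α hspan.ge)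

/-- Let `A` be a complete Noetherian local ring of prime
characteristic `p`, let `H` be a `T`-torsion-free `A[T;f]`-module, and let `I`, `J`
be ideals of `A`.  If for some `α ≥ 0` the `A`-submodule of `H` generated by
`T^α(Ann_H(I·A[T;f]))` equals the `A`-submodule generated by `T^α(Ann_H(J·A[T;f]))`,
then `Ann_H(I·A[T;f]) = Ann_H(J·A[T;f])`. -/
theorem statement5 {A : Type*} [CommRing A] [IsNoetherianRing A] [IsLocalRing A]
    [IsAdicComplete (maximalIdeal A) A] (p : ℕ) (hp : p.Prime) [CharP A p]
    {H : Type*} [AddCommGroup H] [Module A H] (T : H →+ H)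
    (hT : ∀ (a : A) (h : H), T (a • h) = a ^ p • T h)
    (htf : ∀ h : H, T h = 0 → h = 0)
    (I J : Ideal A) (α : ℕ)
    (hspan : Submodule.span A ((⇑T)^[α] '' annTf T I) =
      Submodule.span A ((⇑T)^[α] '' annTf T J)) :
    annTf T I = annTf T J :=
  statement5_general p hp T hT htf I J α hspan
end
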